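/- (Lemma 3.6, Local Abelianness Implies Global Abelianness) Let N be an abelian network on G = (V,E) with vertex set partitioned as V = I ⊔ O, where the processors at output nodes in O never send messages. Suppose N halts on all inputs. Regard the induced subnetwork of interior nodes as a single processor P_I with input alphabet A_I = ⊔_{v∈I} A_v and state space Q_I = ∏_{v∈I} Q_v, processing an input word by running the network with a complete legal execution. Then P_I is an abelian processor: for any two input words ι, ι' ∈ A_I^* with |ι| = |ι'| and any initial state q ∈ Q_I, the final state of P_I is the same, and for each edge (v,u) ∈ E with v ∈ I, u ∈ O, and each letter a ∈ A_u, the number of letters a sent along (v,u) is the same. -/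

import Mathlib

/-- The letter-count vector `|w| ∈ ℕ^A` of a word `w ∈ A^*`. -/
def lc {A : Type*} [DecidableEq A] (w : List A) : A → ℕ := fun a => w.count a

/-- An abelian-network *data* structure on a directed graph with vertex set `V`, edge set `E`
(with source and target maps, allowing loops and multiple edges), total alphabet
`A = ⊔_v A_v` (the letter `a` belongs to the alphabet of the vertex `loc a`), and
state space `Q v` for the processor at vertex `v`.  The abelian hypothesis on the
processors is the separate predicate `AbelianNetwork.IsAbelian`. -/
structure AbelianNetwork (V E A : Type*) (Q : V → Type*) [DecidableEq V] [DecidableEq A] where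
  /-- source of an edge -/
  src : E → V
  /-- target of an edge -/
  tgt : E → V
  /-- the vertex whose input alphabet contains the letter `a` -/
  loc : A → V
  /-- the (finitely many) outgoing edges of each vertex -/
  outEdges : V → Finset E
  mem_outEdges : ∀ (e : E) (v : V), e ∈ outEdges v ↔ src e = v
  /-- single-letter transition function `T_v(a, ·)` of the processor at `v = loc a` -/
  trans : (a : A) → Q (loc a) → Q (loc a)
  /-- message-passing function: the word sent along the edge `e` (with `src e = loc a`)
  when the processor at `loc a` processes the letter `a` in state `q` -/
  msg : (e : E) → (a : A) → Q (loc a) → List A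
  /-- letters sent along `e` belong to the alphabet of the target of `e` -/
  msg_tgt : ∀ (e : E) (a : A) (q : Q (loc a)), src e = loc a → ∀ b ∈ msg e a q, loc b = tgt e

namespace AbelianNetwork

variable {V E A : Type*} {Q : V → Type*} [DecidableEq V] [DecidableEq A]
variable (N : AbelianNetwork V E A Q)

/-- The map `t_a : Q → Q` updating the `loc a` coordinate by `T_{loc a}(a, ·)` and
fixing all other coordinates. -/
def tact (a : A) (q : ∀ v, Q v) : ∀ v, Q v :=
  Function.update q (N.loc a) (N.trans a (q (N.loc a)))

/-- `t_w = t_{w_r} ∘ ⋯ ∘ t_{w_1}` for a word `w = w_1 ⋯ w_r`. -/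
def tword (w : List A) (q : ∀ v, Q v) : ∀ v, Q v :=
  w.foldl (fun q a => N.tact a q) q

/-- The word sent along the edge `e` when the letters of `w` are processed in order,
starting from the global state `q`.  (Extends the message-passing functions to words.) -/
def msgword (e : E) : List A → (∀ v, Q v) → List A
  | [], _ => []
  | a :: w, q =>
      (if N.src e = N.loc a then N.msg e a (q (N.loc a)) else []) ++ msgword e w (N.tact a q)

/-- `N(a, q_{loc a}) ∈ ℕ^A`: the vector counting the letters produced when the processor at
`loc a` processes the letter `a`, summed over the outgoing edges of `loc a`. -/
def Nletter (a : A) (q : ∀ v, Q v) : A → ℕ := fun b =>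
  ∑ e ∈ N.outEdges (N.loc a), (N.msg e a (q (N.loc a))).count b

/-- `N(w, q) = ∑_i N(w_i, q^{i-1}_{v(i)})` for a word `w = w_1 ⋯ w_r`. -/
def Nword : List A → (∀ v, Q v) → A → ℕ
  | [], _ => fun _ => 0
  | a :: w, q => fun b => N.Nletter a q b + Nword w (N.tact a q) b

/-- The network is *abelian*: permuting a word input to a single processor does not change
the resulting state and changes each output word only by permuting its letters. -/
def IsAbelian : Prop :=
  ∀ (v : V) (w w' : List A), (∀ a ∈ w, N.loc a = v) → (∀ a ∈ w', N.loc a = v) →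
    (w : Multiset A) = (w' : Multiset A) →
    ∀ q : ∀ u, Q u,
      N.tword w q = N.tword w' q ∧
      ∀ e : E, ((N.msgword e w q : Multiset A) = (N.msgword e w' q : Multiset A))

/-- The state transition `π_a(x.q) = (x - 1_a + N(a, q_{loc a})).t_a(q)` of the whole
network, viewed as a single automaton with states `x.q ∈ ℤ^A × Q`. -/
def piLetter (a : A) (s : (A → ℤ) × (∀ v, Q v)) : (A → ℤ) × (∀ v, Q v) :=
  (fun b => s.1 b - (if b = a then 1 else 0) + (N.Nletter a s.2 b : ℤ), N.tact a s.2)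

/-- `π_w = π_{w_r} ∘ ⋯ ∘ π_{w_1}`. -/
def piWord (w : List A) (s : (A → ℤ) × (∀ v, Q v)) : (A → ℤ) × (∀ v, Q v) :=
  w.foldl (fun s a => N.piLetter a s) s

/-- The word `w` is a *legal execution* from `x.q`: each letter is a legal move
(`x_a ≥ 1`) from the state obtained by executing the previous letters. -/
def Legal : List A → ((A → ℤ) × (∀ v, Q v)) → Prop
  | [], _ => True
  | a :: w, s => 1 ≤ s.1 a ∧ Legal w (N.piLetter a s)

/-- The word `w` is a *complete execution* from `x.q`: after executing `w`,
no letters remain to be processed. -/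
def Complete (w : List A) (s : (A → ℤ) × (∀ v, Q v)) : Prop :=
  ∀ a : A, (N.piWord w s).1 a ≤ 0

/-- A canonical word with letter-count vector `u ∈ ℕ^A`. -/
noncomputable def vecWord [Fintype A] (u : A → ℕ) : List A :=
  (Finset.univ : Finset A).toList.flatMap fun a => List.replicate (u a) a

/-- `N(u, q)` for a vector `u ∈ ℕ^A`, defined as `N(w, q)` for a word `w` with `|w| = u`. -/
noncomputable def Nvec [Fintype A] (u : A → ℕ) (q : ∀ v, Q v) : A → ℕ := N.Nword (vecWord u) q

end AbelianNetwork

/-!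
If two letters sit at different vertices, processing them in either order visibly has the same
effect; if they sit at the same vertex, the abelian property of that processor says so. Hence
the moves `π_a` commute and swapping two adjacent letters of an execution changes neither the
final configuration nor, up to order, the word sent along any edge. An exchange argument then
moves the first letter of one complete legal execution to the front of any other, so by induction
all complete legal executions from a configuration have the same outcome. Inputs with equal letter
counts give the same initial configuration.
-/

namespace AbelianNetwork

variable {V E A : Type*} {Q : V → Type*} [DecidableEq V] [DecidableEq A]
variable (N : AbelianNetwork V E A Q)

def SameOutcome (s : (A → ℤ) × (∀ v, Q v)) (w w' : List A) : Prop :=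
  N.piWord w s = N.piWord w' s ∧ ∀ e, (N.msgword e w s.2 : Multiset A) = N.msgword e w' s.2

lemma tact_apply_of_ne {a : A} {v : V} (h : N.loc a ≠ v) (q : ∀ v, Q v) :
    N.tact a q v = q v :=
  Function.update_of_ne h.symm _ _

lemma snd_piWord (w : List A) (s : (A → ℤ) × (∀ v, Q v)) :
    (N.piWord w s).2 = N.tword w s.2 := by
  induction w generalizing s with
  | nil => rfl
  | cons a w ih => exact ih (N.piLetter a s)

lemma msgword_append (e : E) (u w : List A) (q : ∀ v, Q v) :
    N.msgword e (u ++ w) q = N.msgword e u q ++ N.msgword e w (N.tword u q) := by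
  induction u generalizing q with
  | nil => rfl
  | cons a u ih => simp only [List.cons_append, msgword, ih, List.append_assoc]; rfl

lemma Nword_eq_sum_count_msgword {v : V} {w : List A} (hw : ∀ a ∈ w, N.loc a = v)
    (q : ∀ v, Q v) (c : A) :
    N.Nword w q c = ∑ e ∈ N.outEdges v, (N.msgword e w q).count c := by
  induction w generalizing q with
  | nil => simp [Nword, msgword]
  | cons a w ih =>
    obtain rfl := hw a List.mem_cons_self
    simp only [Nword, Nletter, ih (fun b hb => hw b (List.mem_cons_of_mem a hb)),
      ← Finset.sum_add_distrib]
    refine Finset.sum_congr rfl fun e he => ?_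
    rw [msgword, if_pos ((N.mem_outEdges e _).1 he), List.count_append]

lemma pair_comm_of_loc_eq (hN : N.IsAbelian) {a b : A} (h : N.loc a = N.loc b)
    (q : ∀ v, Q v) :
    N.tword [a, b] q = N.tword [b, a] q ∧
      (∀ e, (N.msgword e [a, b] q : Multiset A) = N.msgword e [b, a] q) ∧
      N.Nword [a, b] q = N.Nword [b, a] q := by
  have hab : ∀ x ∈ [a, b], N.loc x = N.loc a := by simp [h]
  have hba : ∀ x ∈ [b, a], N.loc x = N.loc a := by simp [h]
  obtain ⟨ht, hm⟩ :=
    hN (N.loc a) [a, b] [b, a] hab hba (Multiset.coe_eq_coe.2 (List.Perm.swap b a [])) q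
  refine ⟨ht, hm, funext fun c => ?_⟩
  rw [N.Nword_eq_sum_count_msgword hab, N.Nword_eq_sum_count_msgword hba]
  exact Finset.sum_congr rfl fun e _ => by rw [← Multiset.coe_count, hm e, Multiset.coe_count]

lemma pair_comm_of_loc_ne {a b : A} (h : N.loc a ≠ N.loc b) (q : ∀ v, Q v) :
    N.tword [a, b] q = N.tword [b, a] q ∧
      (∀ e, (N.msgword e [a, b] q : Multiset A) = N.msgword e [b, a] q) ∧
      N.Nword [a, b] q = N.Nword [b, a] q := by
  have hab : N.tact a q (N.loc b) = q (N.loc b) := N.tact_apply_of_ne h q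
  have hba : N.tact b q (N.loc a) = q (N.loc a) := N.tact_apply_of_ne h.symm q
  refine ⟨?_, fun e => ?_, funext fun c => ?_⟩
  · simp only [tword, List.foldl, tact] at hab hba ⊢
    rw [hab, hba]
    exact Function.update_comm h _ _ q
  · simp only [msgword, hab, hba, List.append_nil, ← Multiset.coe_add]
    exact add_comm _ _
  · simp only [Nword, Nletter, hab, hba]
    omega

lemma pair_comm (hN : N.IsAbelian) (a b : A) (q : ∀ v, Q v) :
    N.tword [a, b] q = N.tword [b, a] q ∧
      (∀ e, (N.msgword e [a, b] q : Multiset A) = N.msgword e [b, a] q) ∧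
      N.Nword [a, b] q = N.Nword [b, a] q := by
  rcases eq_or_ne (N.loc a) (N.loc b) with h | h
  · exact N.pair_comm_of_loc_eq hN h q
  · exact N.pair_comm_of_loc_ne h q

lemma piLetter_comm (hN : N.IsAbelian) (a b : A) (s : (A → ℤ) × (∀ v, Q v)) :
    N.piLetter b (N.piLetter a s) = N.piLetter a (N.piLetter b s) := by
  obtain ⟨ht, -, hNw⟩ := N.pair_comm hN a b s.2
  refine Prod.ext (funext fun c => ?_) ht
  have hc := congrFun hNw c
  simp only [Nword] at hc
  simp only [piLetter]
  split_ifs <;> omega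

lemma fst_le_fst_piLetter {a b : A} (h : b ≠ a) (s : (A → ℤ) × (∀ v, Q v)) :
    s.1 b ≤ (N.piLetter a s).1 b := by
  simp [piLetter, h]

variable {N} in
lemma Complete.of_piWord_eq {w t : List A} {s s' : (A → ℤ) × (∀ v, Q v)}
    (hc : N.Complete w s) (h : N.piWord t s' = N.piWord w s) : N.Complete t s' :=
  fun a => h ▸ hc a

namespace SameOutcome

variable {N}

lemma refl (s : (A → ℤ) × (∀ v, Q v)) (w : List A) : N.SameOutcome s w w :=
  ⟨rfl, fun _ => rfl⟩

lemma trans {s : (A → ℤ) × (∀ v, Q v)} {u v w : List A}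
    (h₁ : N.SameOutcome s u v) (h₂ : N.SameOutcome s v w) : N.SameOutcome s u w :=
  ⟨h₁.1.trans h₂.1, fun e => (h₁.2 e).trans (h₂.2 e)⟩

lemma cons (a : A) {s : (A → ℤ) × (∀ v, Q v)} {u w : List A}
    (h : N.SameOutcome (N.piLetter a s) u w) : N.SameOutcome s (a :: u) (a :: w) := by
  refine ⟨h.1, fun e => ?_⟩
  have hsplit : ∀ v : List A, N.msgword e (a :: v) s.2 =
      N.msgword e [a] s.2 ++ N.msgword e v (N.tword [a] s.2) :=
    fun v => N.msgword_append e [a] v s.2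
  rw [hsplit u, hsplit w, ← Multiset.coe_add, ← Multiset.coe_add]
  exact congrArg (_ + ·) (h.2 e)

lemma swap (hN : N.IsAbelian) (a b : A) (s : (A → ℤ) × (∀ v, Q v)) (u : List A) :
    N.SameOutcome s (a :: b :: u) (b :: a :: u) := by
  obtain ⟨ht, hm, -⟩ := N.pair_comm hN a b s.2
  refine ⟨congrArg (N.piWord u) (N.piLetter_comm hN a b s), fun e => ?_⟩
  have hsplit : ∀ x y : A, N.msgword e (x :: y :: u) s.2 =
      N.msgword e [x, y] s.2 ++ N.msgword e u (N.tword [x, y] s.2) :=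
    fun x y => N.msgword_append e [x, y] u s.2
  rw [hsplit, hsplit, ← Multiset.coe_add, ← Multiset.coe_add, hm e, ht]

end SameOutcome

lemma exists_legal_cons_sameOutcome (hN : N.IsAbelian) (a : A) {w : List A}
    {s : (A → ℤ) × (∀ v, Q v)} (hl : N.Legal w s) (hc : N.Complete w s) (ha : 1 ≤ s.1 a) :
    ∃ t, N.Legal (a :: t) s ∧ N.SameOutcome s (a :: t) w := by
  induction w generalizing s with
  | nil => exact absurd (hc a) (by simp only [piWord, List.foldl]; omega)
  | cons b r ih =>
    obtain rfl | hba := eq_or_ne b a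
    · exact ⟨r, hl, .refl s _⟩
    obtain ⟨t, ⟨-, htl⟩, ht⟩ :=
      ih hl.2 hc (ha.trans (N.fst_le_fst_piLetter hba.symm s))
    refine ⟨b :: t, ⟨ha, hl.1.trans (N.fst_le_fst_piLetter hba _), ?_⟩,
      (SameOutcome.swap hN a b s t).trans (ht.cons b)⟩
    rwa [N.piLetter_comm hN]

theorem sameOutcome_of_legal_complete (hN : N.IsAbelian) {w w' : List A}
    {s : (A → ℤ) × (∀ v, Q v)} (hl : N.Legal w s) (hc : N.Complete w s)
    (hl' : N.Legal w' s) (hc' : N.Complete w' s) : N.SameOutcome s w w' := by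
  induction w generalizing w' s with
  | nil =>
    cases w' with
    | nil => exact .refl s []
    | cons b _ => exact absurd (hc b) (by simp only [piWord, List.foldl]; have := hl'.1; omega)
  | cons a r ih =>
    obtain ⟨t, htl, ht⟩ := N.exists_legal_cons_sameOutcome hN a hl' hc' hl.1
    exact (SameOutcome.cons a (ih hl.2 hc htl.2 (hc'.of_piWord_eq ht.1))).trans ht

end AbelianNetwork

theorem AbelianNetwork.local_to_global_general {V E A : Type*} {Q : V → Type*}
    [DecidableEq V] [DecidableEq A] (N : AbelianNetwork V E A Q) (hN : N.IsAbelian)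
    (I O : Set V) (ι ι' : List A)
    (hc : lc ι = lc ι') (q : ∀ v, Q v) (w w' : List A)
    (hwl : N.Legal w (fun a => (lc ι a : ℤ), q))
    (hwc : N.Complete w (fun a => (lc ι a : ℤ), q))
    (hw'l : N.Legal w' (fun a => (lc ι' a : ℤ), q))
    (hw'c : N.Complete w' (fun a => (lc ι' a : ℤ), q)) :
    (∀ v ∈ I, N.tword w q v = N.tword w' q v) ∧
    (∀ e : E, N.src e ∈ I → N.tgt e ∈ O →
      ∀ b : A, (N.msgword e w q).count b = (N.msgword e w' q).count b) := by
  rw [← hc] at hw'l hw'c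
  obtain ⟨hπ, hmsg⟩ := N.sameOutcome_of_legal_complete hN hwl hwc hw'l hw'c
  have hq : N.tword w q = N.tword w' q := by
    simpa only [snd_piWord] using congrArg Prod.snd hπ
  refine ⟨fun v _ => congrFun hq v, fun e _ _ b => ?_⟩
  simpa only [Multiset.coe_count] using congrArg (Multiset.count b) (hmsg e)

/-- **Lemma 3.6 (Local Abelianness Implies Global Abelianness).** Suppose the vertex set is
partitioned as `V = I ⊔ O`, the processors at the output nodes in `O` never send messages,
and the network halts on all inputs.  Regard the induced subnetwork of interior nodes as a
single processor `P_I` with input alphabet `A_I = ⊔_{v ∈ I} A_v` and state space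
`Q_I = ∏_{v ∈ I} Q_v`, processing an input word by running the network with a complete
legal execution.  Then `P_I` is abelian: for any two input words `ι, ι'` in the interior
alphabet with `|ι| = |ι'|` and any initial state `q`, the final states of the interior
processors agree, and for each edge `(v,u)` with `v ∈ I`, `u ∈ O` and each letter
`b ∈ A_u`, the number of letters `b` sent along `(v,u)` is the same. -/
theorem AbelianNetwork.local_to_global {V E A : Type*} {Q : V → Type*}
    [DecidableEq V] [DecidableEq A] (N : AbelianNetwork V E A Q) (hN : N.IsAbelian)
    (I O : Set V) (hpart : ∀ v : V, (v ∈ I ∧ v ∉ O) ∨ (v ∈ O ∧ v ∉ I))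
    (hout : ∀ (e : E) (a : A) (qa : Q (N.loc a)), N.src e ∈ O → N.msg e a qa = [])
    (hhalt : ∀ (x : A → ℕ) (q : ∀ v, Q v),
      ∃ w : List A, N.Complete w (fun a => (x a : ℤ), q))
    (ι ι' : List A) (hι : ∀ a ∈ ι, N.loc a ∈ I) (hι' : ∀ a ∈ ι', N.loc a ∈ I)
    (hc : lc ι = lc ι') (q : ∀ v, Q v) (w w' : List A)
    (hwl : N.Legal w (fun a => (lc ι a : ℤ), q))
    (hwc : N.Complete w (fun a => (lc ι a : ℤ), q))
    (hw'l : N.Legal w' (fun a => (lc ι' a : ℤ), q))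
    (hw'c : N.Complete w' (fun a => (lc ι' a : ℤ), q)) :
    (∀ v ∈ I, N.tword w q v = N.tword w' q v) ∧
    (∀ e : E, N.src e ∈ I → N.tgt e ∈ O →
      ∀ b : A, (N.msgword e w q).count b = (N.msgword e w' q).count b) :=
  AbelianNetwork.local_to_global_general N hN I O ι ι' hc q w w' hwl hwc hw'l hw'c
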